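/- arXiv:1407.7872 — 6 statements merged into one kernel-verified Lean document; each statement's English description precedes it below -/
import Mathlib

section
/- Let X be a real Banach space and let Y be a uniformly convex real Banach space. Suppose that the set of norm-attaining operators is dense (in operator norm) in the space L(X,Y) of bounded linear operators from X to Y. Then for every ε with 0 < ε < 1 there exists η > 0 such that whenever T ∈ L(X,Y) with ‖T‖ = 1 and x₁ ∈ X with ‖x₁‖ = 1 satisfy ‖T x₁‖ > 1 − η, there exist S ∈ L(X,Y) with ‖S‖ = 1 and x₂ ∈ X with ‖x₂‖ = 1 such that ‖S x₂‖ = 1, ‖S − T‖ < ε and ‖T x₁ − S x₂‖ < ε. -/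
/-!
Given `T` nearly attaining its norm at `x₁`, add to `T` the rank-one operator `l • f ⊗ y`, where
`f` norms `x₁` and `y = T x₁ / ‖T x₁‖`, and approximate the sum by a norm-attaining operator `S`.
The perturbation raises the norm to about `1 + l` only along `y`, so the vector `x₂` at which `S`
attains its norm satisfies `‖T x₂ + y‖ ≈ 2`. Uniform convexity then forces `T x₂ ≈ y ≈ T x₁`, and
`S / ‖S‖` together with `x₂` is the required pair.
-/

open NormedSpace

section Normalize

variable {V : Type*} [NormedAddCommGroup V] [NormedSpace ℝ V]

theorem norm_normalize_sub_le (x : V) : ‖normalize x - x‖ ≤ |1 - ‖x‖| := by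
  rcases eq_or_ne x 0 with rfl | hx
  · simp
  have hx' : 0 < ‖x‖ := norm_pos_iff.mpr hx
  refine le_of_eq ?_
  calc ‖normalize x - x‖ = |‖x‖⁻¹ - 1| * ‖x‖ := by
        rw [NormedSpace.normalize, show ‖x‖⁻¹ • x - x = (‖x‖⁻¹ - 1) • x by module, norm_smul,
          Real.norm_eq_abs]
    _ = |1 - ‖x‖| := by
        rw [← abs_of_pos hx', ← abs_mul, abs_of_pos hx', sub_mul, inv_mul_cancel₀ hx'.ne',
          one_mul, abs_sub_comm]

theorem norm_normalize_sub_le_two_mul_norm_sub (x : V) {z : V} (hz : ‖z‖ = 1) :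
    ‖normalize x - z‖ ≤ 2 * ‖x - z‖ := by
  have := abs_norm_sub_norm_le z x
  rw [hz, norm_sub_rev] at this
  linarith [norm_sub_le_norm_sub_add_norm_sub (normalize x) x z, norm_normalize_sub_le x]

theorem norm_add_smul_normalize {x : V} (hx : x ≠ 0) {l : ℝ} (hl : 0 ≤ l) :
    ‖x + l • normalize x‖ = ‖x‖ + l := by
  rw [show x + l • normalize x = (‖x‖ + l) • normalize x by
    nth_rw 1 [← norm_smul_normalize x]
    rw [add_smul], norm_smul, norm_normalize hx, mul_one, Real.norm_of_nonneg (by positivity)]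

end Normalize

theorem two_mul_sub_le_mul_norm_add {E : Type*} [SeminormedAddCommGroup E] [NormedSpace ℝ E]
    {a y : E} (ha : ‖a‖ ≤ 1) (hy : ‖y‖ = 1) {l t κ : ℝ} (hl0 : 0 < l) (hl1 : l ≤ 1)
    (ht0 : 0 ≤ t) (ht1 : t ≤ 1) (h : 1 + l - κ ≤ ‖a + (l * t) • y‖) :
    2 * l - 2 * κ ≤ l * ‖a + y‖ := by
  have hlt : 0 ≤ l * t := mul_nonneg hl0.le ht0
  have ht : l * (1 - t) ≤ κ := by
    have := norm_add_le a ((l * t) • y)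
    rw [norm_smul, hy, Real.norm_of_nonneg hlt] at this
    linarith
  have hly : 1 + l - 2 * κ ≤ ‖a + l • y‖ := by
    have := norm_sub_le (a + l • y) ((l * (1 - t)) • y)
    rw [norm_smul, hy, Real.norm_of_nonneg (by nlinarith),
      show a + l • y - (l * (1 - t)) • y = a + (l * t) • y by module] at this
    linarith
  have := norm_sub_norm_le (a + l • y) ((1 - l) • a)
  rw [norm_smul, Real.norm_of_nonneg (by linarith),
    show a + l • y - (1 - l) • a = l • (a + y) by module, norm_smul,
    Real.norm_of_nonneg hl0.le] at this
  nlinarith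

namespace ContinuousLinearMap

theorem norm_le_norm_apply_add_two_mul_norm_sub {𝕜 E F : Type*} [NontriviallyNormedField 𝕜]
    [SeminormedAddCommGroup E] [NormedSpace 𝕜 E] [SeminormedAddCommGroup F] [NormedSpace 𝕜 F]
    {U S : E →L[𝕜] F} {x : E} (hx : ‖x‖ = 1) (hS : ‖S x‖ = ‖S‖) :
    ‖U‖ ≤ ‖U x‖ + 2 * ‖U - S‖ := by
  have hSx : ‖S x‖ ≤ ‖U x‖ + ‖U - S‖ := by
    calc ‖S x‖ ≤ ‖U x‖ + ‖(U - S) x‖ := by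
          simpa [sub_apply, norm_sub_rev] using norm_le_insert' (S x) (U x)
      _ ≤ ‖U x‖ + ‖U - S‖ := by
          gcongr; exact (U - S).unit_le_opNorm x hx.le
  linarith [norm_le_insert' U S]

theorem norm_apply_sub_apply_le {𝕜 E F : Type*} [NontriviallyNormedField 𝕜]
    [SeminormedAddCommGroup E] [NormedSpace 𝕜 E] [SeminormedAddCommGroup F] [NormedSpace 𝕜 F]
    (T S : E →L[𝕜] F) (x₁ : E) {x₂ : E} (hx₂ : ‖x₂‖ ≤ 1) (y : F) :
    ‖T x₁ - S x₂‖ ≤ ‖y - T x₁‖ + ‖T x₂ - y‖ + ‖S - T‖ := by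
  have := dist_triangle4 (T x₁) y (T x₂) (S x₂)
  simp only [dist_eq_norm, norm_sub_rev (T x₁) y, norm_sub_rev y (T x₂)] at this
  have hTS : ‖T x₂ - S x₂‖ ≤ ‖S - T‖ := by
    simpa [norm_sub_rev] using (S - T).unit_le_opNorm x₂ hx₂
  linarith

variable {X Y : Type*} [NormedAddCommGroup X] [NormedSpace ℝ X]
  [NormedAddCommGroup Y] [NormedSpace ℝ Y]

theorem exists_norm_eq_one_norm_apply_eq_apply_nonneg {S : X →L[ℝ] Y} {x : X} (hx : ‖x‖ = 1)
    (hS : ‖S x‖ = ‖S‖) (f : StrongDual ℝ X) :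
    ∃ x' : X, ‖x'‖ = 1 ∧ ‖S x'‖ = ‖S‖ ∧ 0 ≤ f x' := by
  rcases le_total 0 (f x) with hfx | hfx
  · exact ⟨x, hx, hS, hfx⟩
  · exact ⟨-x, by rwa [norm_neg], by rwa [map_neg, norm_neg], by simpa using hfx⟩

theorem norm_normalize_apply_eq_one {S : X →L[ℝ] Y} (hS₀ : S ≠ 0) {x : X} (hS : ‖S x‖ = ‖S‖) :
    ‖normalize S x‖ = 1 := by
  rw [NormedSpace.normalize, smul_apply, norm_smul, norm_inv, norm_norm, hS,
    inv_mul_cancel₀ (norm_ne_zero_iff.mpr hS₀)]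

theorem exists_normAttaining_near_of_norm_add_smul_gt
    (hdense : ∀ (T : X →L[ℝ] Y) (δ : ℝ), 0 < δ →
      ∃ S : X →L[ℝ] Y, ‖T - S‖ < δ ∧ ∃ x : X, ‖x‖ = 1 ∧ ‖S x‖ = ‖S‖)
    {T : X →L[ℝ] Y} (hT : ‖T‖ ≤ 1) {x₁ : X} (hx₁ : ‖x₁‖ = 1) {y : Y} (hy : ‖y‖ = 1)
    {l η : ℝ} (hl0 : 0 < l) (hl1 : l ≤ 1) (hη : 0 < η) (hTx₁ : 1 + l - η < ‖T x₁ + l • y‖) :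
    ∃ (S : X →L[ℝ] Y) (x₂ : X), ‖x₂‖ = 1 ∧ ‖S x₂‖ = ‖S‖ ∧ ‖S - T‖ < l + η ∧
      2 * l - 6 * η ≤ l * ‖T x₂ + y‖ := by
  obtain ⟨f, hf, hfx₁⟩ := exists_dual_vector ℝ x₁ (by simp [hx₁])
  set U := T + l • f.smulRight y
  have hUapp (x : X) : U x = T x + (l * f x) • y := by simp [U, smul_smul]
  have hUT : ‖U - T‖ = l := by
    simp [U, norm_smul, norm_smulRight_apply, hf, hy, hl0.le]
  have hU : 1 + l - η < ‖U‖ :=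
    hTx₁.trans_le (by simpa [hUapp, hfx₁, hx₁] using U.unit_le_opNorm x₁ hx₁.le)
  obtain ⟨S, hUS, x, hx, hSx⟩ := hdense U η hη
  obtain ⟨x₂, hx₂, hSx₂, hfx₂⟩ := exists_norm_eq_one_norm_apply_eq_apply_nonneg hx hSx f
  have hUx₂ := norm_le_norm_apply_add_two_mul_norm_sub (U := U) hx₂ hSx₂
  refine ⟨S, x₂, hx₂, hSx₂, ?_, ?_⟩
  · linarith [norm_sub_le_norm_sub_add_norm_sub S U T, norm_sub_rev S U]
  · have hfx₂1 : f x₂ ≤ 1 := by simpa [hf, hx₂] using (le_abs_self _).trans (f.le_opNorm x₂)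
    have hTUx₂ : 1 + l - 3 * η ≤ ‖T x₂ + (l * f x₂) • y‖ := by rw [← hUapp]; linarith
    linarith [two_mul_sub_le_mul_norm_add (T.unit_le_opNorm x₂ hx₂.le |>.trans hT) hy
      hl0 hl1 hfx₂ hfx₂1 hTUx₂]

end ContinuousLinearMap

theorem bpb_of_denseNormAttaining_uniformConvex_general
    {X : Type*} [NormedAddCommGroup X] [NormedSpace ℝ X]
    {Y : Type*} [NormedAddCommGroup Y] [NormedSpace ℝ Y]
    [UniformConvexSpace Y]
    (hdense : ∀ (T : X →L[ℝ] Y) (δ : ℝ), 0 < δ →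
      ∃ S : X →L[ℝ] Y, ‖T - S‖ < δ ∧ ∃ x : X, ‖x‖ = 1 ∧ ‖S x‖ = ‖S‖)
    {ε : ℝ} (hε0 : 0 < ε) (hε1 : ε < 1) :
    ∃ η > (0 : ℝ), ∀ (T : X →L[ℝ] Y) (x₁ : X),
      ‖T‖ = 1 → ‖x₁‖ = 1 → ‖T x₁‖ > 1 - η →
      ∃ (S : X →L[ℝ] Y) (x₂ : X),
        ‖S‖ = 1 ∧ ‖x₂‖ = 1 ∧ ‖S x₂‖ = 1 ∧ ‖S - T‖ < ε ∧ ‖T x₁ - S x₂‖ < ε := by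
  obtain ⟨δ, hδ, huc⟩ := exists_forall_closed_ball_dist_add_le_two_sub Y (half_pos hε0)
  set l := ε / 8 with hl
  set η := l * min δ 1 / 8 with hη
  have hl0 : 0 < l := by positivity
  have hηl : η ≤ l / 8 := by rw [hη]; have := min_le_right δ 1; nlinarith
  have hηδ : 8 * η ≤ l * δ := by rw [hη]; have := min_le_left δ 1; nlinarith
  have hη0 : 0 < η := by positivity
  refine ⟨η, hη0, fun T x₁ hT hx₁ hTx₁ => ?_⟩
  have hTx₁1 : ‖T x₁‖ ≤ 1 := hT ▸ T.unit_le_opNorm x₁ hx₁.le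
  have hTx₁0 : T x₁ ≠ 0 := by intro h; rw [h, norm_zero] at hTx₁; linarith
  set y := normalize (T x₁)
  obtain ⟨S, x₂, hx₂, hSx₂, hST, hTx₂⟩ :=
    ContinuousLinearMap.exists_normAttaining_near_of_norm_add_smul_gt hdense hT.le hx₁
      (norm_normalize hTx₁0) hl0 (by linarith) hη0
      (by rw [norm_add_smul_normalize hTx₁0 hl0.le]; linarith)
  have hTx₂y : ‖T x₂ - y‖ < ε / 2 := by
    by_contra! h
    nlinarith [huc (hT ▸ T.unit_le_opNorm x₂ hx₂.le) (norm_normalize hTx₁0).le h]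
  have hS0 : S ≠ 0 := by rintro rfl; simp [hT] at hST; linarith
  have hyTx₁ : ‖y - T x₁‖ ≤ 1 - ‖T x₁‖ :=
    (norm_normalize_sub_le _).trans_eq (abs_of_nonneg (by linarith))
  have hST' := norm_normalize_sub_le_two_mul_norm_sub S hT
  refine ⟨normalize S, x₂, norm_normalize hS0, hx₂,
    ContinuousLinearMap.norm_normalize_apply_eq_one hS0 hSx₂, by linarith, ?_⟩
  linarith [ContinuousLinearMap.norm_apply_sub_apply_le T (normalize S) x₁ hx₂.le y]

/-- If `Y` is uniformly convex and the norm-attaining operators are dense in `L(X,Y)`,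
then for every `0 < ε < 1` there is `η > 0` such that whenever `‖T‖ = 1`, `‖x₁‖ = 1` and
`‖T x₁‖ > 1 - η`, there are `S` with `‖S‖ = 1` and `x₂` with `‖x₂‖ = 1` such that
`‖S x₂‖ = 1`, `‖S - T‖ < ε` and `‖T x₁ - S x₂‖ < ε`. -/
theorem bpb_of_denseNormAttaining_uniformConvex
    {X : Type*} [NormedAddCommGroup X] [NormedSpace ℝ X] [CompleteSpace X]
    {Y : Type*} [NormedAddCommGroup Y] [NormedSpace ℝ Y] [CompleteSpace Y]
    [UniformConvexSpace Y]
    (hdense : ∀ (T : X →L[ℝ] Y) (δ : ℝ), 0 < δ →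
      ∃ S : X →L[ℝ] Y, ‖T - S‖ < δ ∧ ∃ x : X, ‖x‖ = 1 ∧ ‖S x‖ = ‖S‖)
    {ε : ℝ} (hε0 : 0 < ε) (hε1 : ε < 1) :
    ∃ η > (0 : ℝ), ∀ (T : X →L[ℝ] Y) (x₁ : X),
      ‖T‖ = 1 → ‖x₁‖ = 1 → ‖T x₁‖ > 1 - η →
      ∃ (S : X →L[ℝ] Y) (x₂ : X),
        ‖S‖ = 1 ∧ ‖x₂‖ = 1 ∧ ‖S x₂‖ = 1 ∧ ‖S - T‖ < ε ∧ ‖T x₁ - S x₂‖ < ε :=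
  bpb_of_denseNormAttaining_uniformConvex_general hdense hε0 hε1
end

section
/- Let X be a real Banach space and let Y be a uniformly convex real Banach space with modulus of convexity δ_Y, and suppose the set of norm-attaining operators is dense (in operator norm) in L(X,Y). Let 0 < ε < 1, let 0 < ε₁ < ε, and let ε₂ > 0 satisfy (1 − ε₂²)³ − 2ε₂ − ε₂³ > 1 − δ_Y(ε₁) and ε₂² + 2ε₂ + ε₁ < ε. Then whenever T ∈ L(X,Y) with ‖T‖ = 1 and x₁ ∈ X with ‖x₁‖ = 1 satisfy ‖T x₁‖ > 1 − ε₂², there exist S ∈ L(X,Y) with ‖S‖ = 1 and x₂ ∈ X with ‖x₂‖ = 1 such that ‖S x₂‖ = 1, ‖S − T‖ < ε and ‖T x₁ − S x₂‖ < ε. -/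
/-- The modulus of convexity of a real normed space `Y`:
`δ_Y(ε) = inf {1 - ‖(x+y)/2‖ : ‖x‖ ≤ 1, ‖y‖ ≤ 1, ‖x - y‖ ≥ ε}`. -/
noncomputable def modulusOfConvexity (Y : Type*) [NormedAddCommGroup Y] (ε : ℝ) : ℝ :=
  sInf {d : ℝ | ∃ x y : Y, ‖x‖ ≤ 1 ∧ ‖y‖ ≤ 1 ∧ ε ≤ ‖x - y‖ ∧ d = 1 - ‖x + y‖ / 2}

/-!
Perturb `T` towards `x₁`: with `f` a norming functional of `x₁` and `u = T x₁ / ‖T x₁‖`, the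
operator `R = T + ε₂ • (f ⊗ u)` is `ε₂`-close to `T` and `‖R x₁‖ = ‖T x₁‖ + ε₂ ≈ 1 + ε₂`.
Approximate `R` within `ε₂² / 4` by an operator `S₁` attaining its norm at `σ`, where `f σ ≥ 0`
after replacing `σ` by `-σ`. Then `R σ = T σ + ε₂ (f σ) u` has norm `≈ 1 + ε₂`, which forces
`f σ ≈ 1` and `‖T σ + (f σ) u‖ ≈ 2`; the modulus of convexity at `ε₁` then gives
`‖T σ - (f σ) u‖ < ε₁`. Hence `S = ‖S₁‖⁻¹ • S₁` and `x₂ = σ` satisfy `S x₂ ≈ u ≈ T x₁`.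
-/

section ModulusOfConvexity

variable {Y : Type*} [NormedAddCommGroup Y]

theorem modulusOfConvexity_le {ε : ℝ} {x y : Y} (hx : ‖x‖ ≤ 1) (hy : ‖y‖ ≤ 1)
    (hxy : ε ≤ ‖x - y‖) : modulusOfConvexity Y ε ≤ 1 - ‖x + y‖ / 2 := by
  refine csInf_le ⟨0, ?_⟩ ⟨x, y, hx, hy, hxy, rfl⟩
  rintro d ⟨x', y', hx', hy', -, rfl⟩
  linarith [norm_add_le x' y']

theorem norm_sub_lt_of_two_sub_modulusOfConvexity_lt {ε : ℝ} {x y : Y} (hx : ‖x‖ ≤ 1)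
    (hy : ‖y‖ ≤ 1) (h : 2 - 2 * modulusOfConvexity Y ε < ‖x + y‖) : ‖x - y‖ < ε := by
  by_contra! hxy
  linarith [modulusOfConvexity_le hx hy hxy]

variable [NormedSpace ℝ Y]

/-- Since `x + c • y = (1 - c) • x + c • (x + y)`, a long `x + c • y` forces a long `x + y`. -/
theorem norm_sub_lt_of_lt_norm_add_smul {ε c : ℝ} {x y : Y} (hx : ‖x‖ ≤ 1) (hy : ‖y‖ ≤ 1)
    (hc0 : 0 < c) (hc1 : c ≤ 1)
    (h : 1 + c * (1 - 2 * modulusOfConvexity Y ε) < ‖x + c • y‖) : ‖x - y‖ < ε := by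
  refine norm_sub_lt_of_two_sub_modulusOfConvexity_lt hx hy ?_
  have hsplit : x + c • y = (1 - c) • x + c • (x + y) := by module
  have hle : ‖x + c • y‖ ≤ (1 - c) + c * ‖x + y‖ := by
    calc ‖x + c • y‖ ≤ ‖(1 - c) • x‖ + ‖c • (x + y)‖ := hsplit ▸ norm_add_le _ _
      _ = (1 - c) * ‖x‖ + c * ‖x + y‖ := by
        rw [norm_smul, norm_smul, Real.norm_of_nonneg (by linarith), Real.norm_of_nonneg hc0.le]
      _ ≤ (1 - c) + c * ‖x + y‖ := by nlinarith
  nlinarith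

end ModulusOfConvexity

section NormedSpace

variable {E : Type*} [NormedAddCommGroup E] [NormedSpace ℝ E]

theorem norm_add_smul_inv_norm_smul {y : E} (hy : y ≠ 0) {c : ℝ} (hc : 0 ≤ c) :
    ‖y + c • (‖y‖⁻¹ • y)‖ = ‖y‖ + c := by
  have hy' : 0 < ‖y‖ := norm_pos_iff.mpr hy
  have hscale : y + c • (‖y‖⁻¹ • y) = (1 + c * ‖y‖⁻¹) • y := by module
  rw [hscale, norm_smul, Real.norm_of_nonneg (by positivity)]
  field_simp

theorem norm_inv_norm_smul_sub_le_two_mul {v w : E} (hw : ‖w‖ ≤ 1) (hv : 1 ≤ ‖v‖) :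
    ‖‖v‖⁻¹ • v - w‖ ≤ 2 * ‖v - w‖ := by
  have hv0 : 0 < ‖v‖ := by linarith
  have hnormalize : ‖‖v‖⁻¹ • v - v‖ = ‖v‖ - 1 := by
    have hscale : ‖v‖⁻¹ • v - v = (‖v‖⁻¹ - 1) • v := by module
    rw [hscale, norm_smul, Real.norm_of_nonpos (by simp [inv_le_one_of_one_le₀ hv])]
    field_simp
    ring
  calc ‖‖v‖⁻¹ • v - w‖ ≤ ‖‖v‖⁻¹ • v - v‖ + ‖v - w‖ := norm_sub_le_norm_sub_add_norm_sub _ _ _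
    _ ≤ 2 * ‖v - w‖ := by linarith [norm_sub_norm_le v w]

theorem norm_sub_inv_smul_le {t : ℝ} (ht : 1 ≤ t) (u v : E) : ‖u - t⁻¹ • v‖ ≤ ‖t • u - v‖ := by
  have ht0 : 0 < t := by linarith
  have hrescale : u - t⁻¹ • v = t⁻¹ • (t • u - v) := by
    rw [smul_sub, smul_smul, inv_mul_cancel₀ ht0.ne', one_smul]
  rw [hrescale, norm_smul, Real.norm_of_nonneg (inv_nonneg.mpr ht0.le)]
  exact mul_le_of_le_one_left (norm_nonneg _) (inv_le_one_of_one_le₀ ht)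

end NormedSpace

section Operators

variable {X Y : Type*} [NormedAddCommGroup X] [NormedSpace ℝ X] [NormedAddCommGroup Y]
  [NormedSpace ℝ Y]

theorem exists_normAttaining_near_nonneg
    (hdense : ∀ (T : X →L[ℝ] Y) (δ : ℝ), 0 < δ →
      ∃ S : X →L[ℝ] Y, ‖T - S‖ < δ ∧ ∃ x : X, ‖x‖ = 1 ∧ ‖S x‖ = ‖S‖)
    (R : X →L[ℝ] Y) {η : ℝ} (hη : 0 < η) (f : StrongDual ℝ X) :
    ∃ (S : X →L[ℝ] Y) (σ : X), ‖R - S‖ < η ∧ ‖σ‖ = 1 ∧ ‖S σ‖ = ‖S‖ ∧ 0 ≤ f σ := by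
  obtain ⟨S, hRS, x, hx, hSx⟩ := hdense R η hη
  rcases le_total 0 (f x) with hfx | hfx
  · exact ⟨S, x, hRS, hx, hSx, hfx⟩
  · exact ⟨S, -x, hRS, by rwa [norm_neg], by rwa [map_neg, norm_neg], by simpa⟩

theorem add_smul_smulRight_apply (T : X →L[ℝ] Y) (f : StrongDual ℝ X) (c : ℝ) (u : Y) (x : X) :
    (T + c • f.smulRight u) x = T x + (c * f x) • u := by
  simp [smul_smul]

theorem norm_add_smul_smulRight_sub_le (T : X →L[ℝ] Y) {f : StrongDual ℝ X} (hf : ‖f‖ ≤ 1)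
    {c : ℝ} (hc : 0 ≤ c) {u : Y} (hu : ‖u‖ ≤ 1) : ‖T + c • f.smulRight u - T‖ ≤ c := by
  rw [add_sub_cancel_left, norm_smul, ContinuousLinearMap.norm_smulRight_apply,
    Real.norm_of_nonneg hc]
  exact mul_le_of_le_one_right hc (mul_le_one₀ hf (norm_nonneg _) hu)

theorem exists_smulRight_perturbation (T : X →L[ℝ] Y) {x : X} (hx : ‖x‖ = 1) (hTx : T x ≠ 0)
    {c : ℝ} (hc : 0 ≤ c) :
    ∃ (f : StrongDual ℝ X) (u : Y), ‖f‖ = 1 ∧ ‖u‖ = 1 ∧ T x = ‖T x‖ • u ∧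
      ‖(T + c • f.smulRight u) x‖ = ‖T x‖ + c := by
  obtain ⟨f, hf, hfx⟩ := exists_dual_vector ℝ x (by simp [hx])
  refine ⟨f, ‖T x‖⁻¹ • T x, hf, norm_smul_inv_norm hTx, ?_, ?_⟩
  · rw [smul_smul, mul_inv_cancel₀ (norm_ne_zero_iff.mpr hTx), one_smul]
  · rw [add_smul_smulRight_apply, hfx, hx]
    simpa using norm_add_smul_inv_norm_smul hTx hc

theorem norm_apply_sub_norm_sub_le_norm (R S : X →L[ℝ] Y) {x : X} (hx : ‖x‖ ≤ 1) :
    ‖R x‖ - ‖R - S‖ ≤ ‖S‖ := by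
  have hRSx : ‖R x - S x‖ ≤ ‖R - S‖ := (R - S).unit_le_opNorm x hx
  linarith [S.unit_le_opNorm x hx, norm_sub_norm_le (R x) (S x)]

theorem norm_inv_norm_smul_apply {S : X →L[ℝ] Y} (hS : S ≠ 0) {x : X} (hSx : ‖S x‖ = ‖S‖) :
    ‖(‖S‖⁻¹ • S) x‖ = 1 := by
  rw [smul_apply, norm_smul, hSx, norm_inv, norm_norm, inv_mul_cancel₀ (norm_ne_zero_iff.mpr hS)]

end Operators

section KeyEstimate

variable {Y : Type*} [NormedAddCommGroup Y] [NormedSpace ℝ Y]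

theorem norm_smul_sub_inv_smul_lt {a b u : Y} {m s t ε₁ ε₂ : ℝ} (hε₂0 : 0 < ε₂)
    (hε₂ : ε₂ < 1 / 2) (hδ : 2 * ε₂ < modulusOfConvexity Y ε₁) (ha : ‖a‖ ≤ 1) (hu : ‖u‖ = 1)
    (hs0 : 0 ≤ s) (hs1 : s ≤ 1) (hm : 1 - ε₂ ^ 2 < m) (hm1 : m ≤ 1)
    (ht : m + ε₂ - ε₂ ^ 2 / 4 ≤ t) (hb : ‖b‖ = t)
    (hab : ‖b - (a + (ε₂ * s) • u)‖ ≤ ε₂ ^ 2 / 4) :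
    ‖m • u - t⁻¹ • b‖ < ε₂ ^ 2 + 2 * ε₂ + ε₁ := by
  set v := a + (ε₂ * s) • u with hv
  have hsu : ‖s • u‖ = s := by rw [norm_smul, hu, mul_one, Real.norm_of_nonneg hs0]
  have hv_le : ‖v‖ ≤ 1 + ε₂ * s := by
    calc ‖v‖ ≤ ‖a‖ + ‖(ε₂ * s) • u‖ := norm_add_le _ _
      _ ≤ 1 + ε₂ * s := by
        rw [norm_smul, hu, mul_one, Real.norm_of_nonneg (by positivity)]; linarith
  have hv_ge : t - ε₂ ^ 2 / 4 ≤ ‖v‖ := by linarith [norm_sub_norm_le b v]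
  have hconv : ‖a - s • u‖ < ε₁ := by
    refine norm_sub_lt_of_lt_norm_add_smul ha (hsu.le.trans hs1) hε₂0 (by linarith) ?_
    rw [smul_smul]
    nlinarith [mul_lt_mul_of_pos_left hδ hε₂0]
  have hs : 1 - s < 3 * ε₂ / 2 := by nlinarith
  have hcoef : |t - (1 + ε₂) * s| < 2 * ε₂ - ε₂ ^ 2 / 4 := by
    rw [abs_lt]; constructor <;> nlinarith
  have ht1 : 1 ≤ t := by nlinarith
  have hmu : m • u - u = (m - 1) • u := by module
  have hsplit : t • u - v = (t - (1 + ε₂) * s) • u - (a - s • u) := by rw [hv]; module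
  calc ‖m • u - t⁻¹ • b‖ ≤ ‖m • u - u‖ + ‖u - t⁻¹ • b‖ := norm_sub_le_norm_sub_add_norm_sub _ _ _
    _ ≤ (1 - m) + (‖t • u - v‖ + ‖v - b‖) := by
        gcongr
        · rw [hmu, norm_smul, hu, mul_one, Real.norm_of_nonpos (by linarith), neg_sub]
        · exact (norm_sub_inv_smul_le ht1 u b).trans (norm_sub_le_norm_sub_add_norm_sub _ _ _)
    _ ≤ (1 - m) + (|t - (1 + ε₂) * s| + ‖a - s • u‖ + ε₂ ^ 2 / 4) := by
        rw [hsplit, norm_sub_rev v]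
        gcongr
        calc _ ≤ _ := norm_sub_le _ _
          _ = _ := by rw [norm_smul, hu, mul_one, Real.norm_eq_abs]
    _ < ε₂ ^ 2 + 2 * ε₂ + ε₁ := by linarith

end KeyEstimate

theorem bpb_of_denseNormAttaining_uniformConvex_quantitative_general
    {X : Type*} [NormedAddCommGroup X] [NormedSpace ℝ X]
    {Y : Type*} [NormedAddCommGroup Y] [NormedSpace ℝ Y]
    (hdense : ∀ (T : X →L[ℝ] Y) (δ : ℝ), 0 < δ →
      ∃ S : X →L[ℝ] Y, ‖T - S‖ < δ ∧ ∃ x : X, ‖x‖ = 1 ∧ ‖S x‖ = ‖S‖)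
    {ε ε₁ ε₂ : ℝ} (hε1 : ε < 1) (hε₁0 : 0 < ε₁)
    (hε₂0 : 0 < ε₂)
    (hδ : (1 - ε₂ ^ 2) ^ 3 - 2 * ε₂ - ε₂ ^ 3 > 1 - modulusOfConvexity Y ε₁)
    (hsum : ε₂ ^ 2 + 2 * ε₂ + ε₁ < ε)
    (T : X →L[ℝ] Y) (x₁ : X) (hT : ‖T‖ = 1) (hx₁ : ‖x₁‖ = 1)
    (hTx₁ : ‖T x₁‖ > 1 - ε₂ ^ 2) :
    ∃ (S : X →L[ℝ] Y) (x₂ : X),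
      ‖S‖ = 1 ∧ ‖x₂‖ = 1 ∧ ‖S x₂‖ = 1 ∧ ‖S - T‖ < ε ∧ ‖T x₁ - S x₂‖ < ε := by
  have hε₂ : ε₂ < 1 / 2 := by nlinarith
  have hδε₂ : 2 * ε₂ < modulusOfConvexity Y ε₁ := by
    nlinarith [pow_le_one₀ (n := 3) (by nlinarith : 0 ≤ 1 - ε₂ ^ 2) (by nlinarith)]
  have hm1 : ‖T x₁‖ ≤ 1 := hT ▸ T.unit_le_opNorm x₁ hx₁.le
  obtain ⟨f, u, hf, hu, hTx₁u, hRx₁⟩ :=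
    exists_smulRight_perturbation T hx₁ (norm_pos_iff.mp (by nlinarith)) hε₂0.le
  set R := T + ε₂ • f.smulRight u
  obtain ⟨S, σ, hRS, hσ, hSσ, hfσ⟩ :=
    exists_normAttaining_near_nonneg hdense R (by positivity : 0 < ε₂ ^ 2 / 4) f
  have hSx₁ : ‖T x₁‖ + ε₂ - ε₂ ^ 2 / 4 ≤ ‖S‖ := by
    linarith [norm_apply_sub_norm_sub_le_norm R S hx₁.le]
  have hS0 : S ≠ 0 := norm_pos_iff.mp (by nlinarith)
  refine ⟨‖S‖⁻¹ • S, σ, norm_smul_inv_norm hS0, hσ, norm_inv_norm_smul_apply hS0 hSσ, ?_, ?_⟩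
  · calc ‖‖S‖⁻¹ • S - T‖ ≤ 2 * ‖S - T‖ := norm_inv_norm_smul_sub_le_two_mul hT.le (by nlinarith)
      _ ≤ 2 * (‖S - R‖ + ‖R - T‖) := by gcongr; exact norm_sub_le_norm_sub_add_norm_sub _ _ _
      _ < ε := by
        rw [norm_sub_rev]
        nlinarith [norm_add_smul_smulRight_sub_le T hf.le hε₂0.le hu.le]
  · have hfσ1 : f σ ≤ 1 := (le_abs_self _).trans (by simpa [hf] using f.unit_le_opNorm σ hσ.le)
    have hSRσ : ‖S σ - (T σ + (ε₂ * f σ) • u)‖ ≤ ε₂ ^ 2 / 4 := by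
      rw [← add_smul_smulRight_apply, norm_sub_rev]
      exact ((R - S).unit_le_opNorm σ hσ.le).trans hRS.le
    rw [hTx₁u]
    exact (norm_smul_sub_inv_smul_lt hε₂0 hε₂ hδε₂ (hT ▸ T.unit_le_opNorm σ hσ.le) hu hfσ hfσ1
      hTx₁ hm1 hSx₁ hSσ hSRσ).trans hsum

/-- Quantitative version: if the norm-attaining operators are dense in `L(X,Y)` with `Y`
uniformly convex with modulus of convexity `δ_Y`, `0 < ε₁ < ε < 1`, `ε₂ > 0` satisfies
`(1 - ε₂²)³ - 2ε₂ - ε₂³ > 1 - δ_Y(ε₁)` and `ε₂² + 2ε₂ + ε₁ < ε`, then whenever `‖T‖ = 1`,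
`‖x₁‖ = 1` and `‖T x₁‖ > 1 - ε₂²`, there are `S` with `‖S‖ = 1` and `x₂` with `‖x₂‖ = 1`
such that `‖S x₂‖ = 1`, `‖S - T‖ < ε` and `‖T x₁ - S x₂‖ < ε`. -/
theorem bpb_of_denseNormAttaining_uniformConvex_quantitative
    {X : Type*} [NormedAddCommGroup X] [NormedSpace ℝ X] [CompleteSpace X]
    {Y : Type*} [NormedAddCommGroup Y] [NormedSpace ℝ Y] [CompleteSpace Y]
    [UniformConvexSpace Y]
    (hdense : ∀ (T : X →L[ℝ] Y) (δ : ℝ), 0 < δ →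
      ∃ S : X →L[ℝ] Y, ‖T - S‖ < δ ∧ ∃ x : X, ‖x‖ = 1 ∧ ‖S x‖ = ‖S‖)
    {ε ε₁ ε₂ : ℝ} (hε0 : 0 < ε) (hε1 : ε < 1) (hε₁0 : 0 < ε₁) (hε₁ε : ε₁ < ε)
    (hε₂0 : 0 < ε₂)
    (hδ : (1 - ε₂ ^ 2) ^ 3 - 2 * ε₂ - ε₂ ^ 3 > 1 - modulusOfConvexity Y ε₁)
    (hsum : ε₂ ^ 2 + 2 * ε₂ + ε₁ < ε)
    (T : X →L[ℝ] Y) (x₁ : X) (hT : ‖T‖ = 1) (hx₁ : ‖x₁‖ = 1)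
    (hTx₁ : ‖T x₁‖ > 1 - ε₂ ^ 2) :
    ∃ (S : X →L[ℝ] Y) (x₂ : X),
      ‖S‖ = 1 ∧ ‖x₂‖ = 1 ∧ ‖S x₂‖ = 1 ∧ ‖S - T‖ < ε ∧ ‖T x₁ - S x₂‖ < ε :=
  bpb_of_denseNormAttaining_uniformConvex_quantitative_general hdense hε1 hε₁0 hε₂0 hδ hsum T x₁ hT
    hx₁ hTx₁
end

section
/- Let K be a compact Hausdorff space, X a real Banach space, and G a countably additive, regular X-valued Borel vector measure on K with semivariation ‖G‖(K) = 1. Let 0 < η < 1 and 0 < γ < 1. Assume f ∈ C(K) with ‖f‖ = 1 and x* ∈ X* with ‖x*‖ = 1 satisfy ∫_K f d(x*G) > 1 − η. Then |x*G|( K ∖ (A⁺_γ ∪ A⁻_γ) ) < 2η/γ + η, where A⁺_γ = {t ∈ K : f(t) ≥ 1 − γ} and A⁻_γ = {t ∈ K : f(t) ≤ −1 + γ}. -/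
open MeasureTheory

/-- The finite signed measure `E ↦ x*(G(E))` obtained from an `X`-valued vector measure `G`
and a continuous linear functional `x*`. -/
noncomputable def dualMeasure {K : Type*} [MeasurableSpace K] {X : Type*}
    [NormedAddCommGroup X] [NormedSpace ℝ X]
    (G : VectorMeasure K X) (xs : StrongDual ℝ X) : SignedMeasure K :=
  G.mapRange xs.toLinearMap.toAddMonoidHom xs.continuous

/-- The integral of a function against a signed measure, via the Jordan decomposition. -/
noncomputable def sintegral {K : Type*} [MeasurableSpace K]
    (s : SignedMeasure K) (f : K → ℝ) : ℝ :=
  (∫ t, f t ∂s.toJordanDecomposition.posPart) - ∫ t, f t ∂s.toJordanDecomposition.negPart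

/-- The semivariation `‖G‖(A) = sup {|x*G|(A) : ‖x*‖ ≤ 1}` of a vector measure. -/
noncomputable def semivariation {K : Type*} [MeasurableSpace K] {X : Type*}
    [NormedAddCommGroup X] [NormedSpace ℝ X]
    (G : VectorMeasure K X) (A : Set K) : ENNReal :=
  ⨆ xs ∈ Metric.closedBall (0 : StrongDual ℝ X) 1,
    (dualMeasure G xs).totalVariation A

/-- Regularity of a vector measure: every Borel set can be approximated from inside by
compact sets and from outside by open sets in semivariation. -/
def IsRegularVM {K : Type*} [TopologicalSpace K] [MeasurableSpace K] {X : Type*}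
    [NormedAddCommGroup X] [NormedSpace ℝ X] (G : VectorMeasure K X) : Prop :=
  ∀ E : Set K, MeasurableSet E → ∀ ε : ℝ, 0 < ε →
    ∃ F O : Set K, IsCompact F ∧ IsOpen O ∧ F ⊆ E ∧ E ⊆ O ∧
      semivariation G (O \ F) < ENNReal.ofReal ε

/-! On the band `B = {t | -1 + γ < f t < 1 - γ}` we have `|f| ≤ 1 - γ`, and `|f| ≤ 1` elsewhere, so
`∫ f d(x*G) ≤ ∫ |f| d|x*G| ≤ |x*G|(K) - γ |x*G|(B) ≤ 1 - γ |x*G|(B)`, the last step because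
`|x*G|(K) ≤ ‖G‖(K) = 1`. Comparing with `∫ f d(x*G) > 1 - η` gives `γ |x*G|(B) < η`. -/

section

variable {K : Type*} [MeasurableSpace K]

theorem totalVariation_dualMeasure_le_semivariation {X : Type*} [NormedAddCommGroup X]
    [NormedSpace ℝ X] (G : VectorMeasure K X) {xs : StrongDual ℝ X} (hxs : ‖xs‖ ≤ 1) (A : Set K) :
    (dualMeasure G xs).totalVariation A ≤ semivariation G A :=
  le_iSup₂ (f := fun xs' (_ : xs' ∈ Metric.closedBall (0 : StrongDual ℝ X) 1) =>
    (dualMeasure G xs').totalVariation A) xs (by simpa using hxs)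

theorem sintegral_le_integral_abs (s : SignedMeasure K) {f : K → ℝ}
    (hf : Integrable f s.totalVariation) :
    sintegral s f ≤ ∫ t, |f t| ∂s.totalVariation := by
  have h₁ : Integrable f s.toJordanDecomposition.posPart :=
    hf.mono_measure (Measure.le_add_right le_rfl)
  have h₂ : Integrable f s.toJordanDecomposition.negPart :=
    hf.mono_measure (Measure.le_add_left le_rfl)
  have hpos := integral_mono h₁ h₁.abs fun t => le_abs_self (f t)
  have hneg := integral_mono (f := fun t => -f t) h₂.neg h₂.abs fun t => neg_le_abs (f t)
  rw [integral_neg] at hneg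
  rw [SignedMeasure.totalVariation, integral_add_measure h₁.abs h₂.abs, sintegral]
  linarith

theorem integral_abs_le_of_abs_le_one_sub_on {μ : Measure K} [IsFiniteMeasure μ] {f : K → ℝ}
    {B : Set K} {γ : ℝ} (hB : MeasurableSet B) (hf : Integrable f μ)
    (hf₁ : ∀ t, |f t| ≤ 1) (hfB : ∀ t ∈ B, |f t| ≤ 1 - γ) :
    ∫ t, |f t| ∂μ ≤ μ.real Set.univ - γ * μ.real B := by
  have hle : ∀ t, |f t| ≤ 1 - γ * B.indicator 1 t := by
    intro t
    by_cases ht : t ∈ B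
    · simpa [Set.indicator_of_mem ht] using hfB t ht
    · simpa [Set.indicator_of_notMem ht] using hf₁ t
  have hB₁ : Integrable (fun t => γ * B.indicator 1 t) μ :=
    ((integrable_const (1 : ℝ)).indicator hB).const_mul γ
  calc ∫ t, |f t| ∂μ ≤ ∫ t, (1 - γ * B.indicator 1 t) ∂μ :=
        integral_mono hf.abs ((integrable_const 1).sub hB₁) hle
    _ = μ.real Set.univ - γ * μ.real B := by
      rw [integral_sub (integrable_const 1) hB₁, integral_const, integral_const_mul,
        integral_indicator_one hB, smul_eq_mul, mul_one]

end

theorem totalVariation_compl_lt_of_integral_gt_general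
    {K : Type*} [TopologicalSpace K] [CompactSpace K]
    [MeasurableSpace K] [BorelSpace K]
    {X : Type*} [NormedAddCommGroup X] [NormedSpace ℝ X]
    (G : VectorMeasure K X)
    (hGnorm : semivariation G Set.univ = 1)
    {η γ : ℝ} (hγ0 : 0 < γ)
    (f : C(K, ℝ)) (hf : ‖f‖ = 1)
    (xs : StrongDual ℝ X) (hxs : ‖xs‖ = 1)
    (hint : sintegral (dualMeasure G xs) (fun t => f t) > 1 - η) :
    (dualMeasure G xs).totalVariation
        (Set.univ \ ({t | 1 - γ ≤ f t} ∪ {t | f t ≤ -1 + γ})) <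
      ENNReal.ofReal (2 * η / γ + η) := by
  set μ := (dualMeasure G xs).totalVariation
  set B := Set.univ \ ({t | 1 - γ ≤ f t} ∪ {t | f t ≤ -1 + γ})
  have hB : MeasurableSet B :=
    MeasurableSet.univ.diff ((measurableSet_le measurable_const f.measurable).union
      (measurableSet_le f.measurable measurable_const))
  have hf₁ (t : K) : |f t| ≤ 1 := hf ▸ f.norm_coe_le_norm t
  have hfB : ∀ t ∈ B, |f t| ≤ 1 - γ := by
    rintro t ⟨-, ht⟩
    simp only [Set.mem_union, Set.mem_ofPred_eq, not_or, not_le] at ht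
    exact abs_le.2 ⟨by linarith, by linarith⟩
  have hμ : μ.real Set.univ ≤ 1 := by
    have := totalVariation_dualMeasure_le_semivariation G hxs.le Set.univ
    rw [hGnorm] at this
    exact ENNReal.toReal_le_of_le_ofReal zero_le_one (by simpa using this)
  have hγB : γ * μ.real B < η := by
    have hfμ : Integrable f μ := f.continuous.integrable_of_hasCompactSupport (.of_compactSpace _)
    have := (sintegral_le_integral_abs (dualMeasure G xs) hfμ).trans
      (integral_abs_le_of_abs_le_one_sub_on hB hfμ hf₁ hfB)
    linarith
  have hB₀ : 0 ≤ μ.real B := measureReal_nonneg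
  rw [ENNReal.lt_ofReal_iff_toReal_lt (measure_ne_top _ _)]
  calc μ.real B < η / γ := by rw [lt_div_iff₀ hγ0]; linarith
    _ ≤ 2 * η / γ + η := by
      have hη : 0 ≤ η := by nlinarith
      have : 0 ≤ η / γ := div_nonneg hη hγ0.le
      rw [mul_div_assoc]; linarith

/-- **Lemma (first part).** If `G` is a countably additive, regular `X`-valued Borel
vector measure on a compact Hausdorff space `K` with semivariation `‖G‖(K) = 1`,
`0 < η, γ < 1`, `f ∈ C(K)` with `‖f‖ = 1` and `x*` with `‖x*‖ = 1` satisfy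
`∫_K f d(x*G) > 1 - η`, then `|x*G|(K ∖ (A⁺_γ ∪ A⁻_γ)) < 2η/γ + η`, where
`A⁺_γ = {t : f t ≥ 1 - γ}` and `A⁻_γ = {t : f t ≤ -1 + γ}`. -/
theorem totalVariation_compl_lt_of_integral_gt
    {K : Type*} [TopologicalSpace K] [CompactSpace K] [T2Space K]
    [MeasurableSpace K] [BorelSpace K]
    {X : Type*} [NormedAddCommGroup X] [NormedSpace ℝ X] [CompleteSpace X]
    (G : VectorMeasure K X) (hreg : IsRegularVM G)
    (hGnorm : semivariation G Set.univ = 1)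
    {η γ : ℝ} (hη0 : 0 < η) (hη1 : η < 1) (hγ0 : 0 < γ) (hγ1 : γ < 1)
    (f : C(K, ℝ)) (hf : ‖f‖ = 1)
    (xs : StrongDual ℝ X) (hxs : ‖xs‖ = 1)
    (hint : sintegral (dualMeasure G xs) (fun t => f t) > 1 - η) :
    (dualMeasure G xs).totalVariation
        (Set.univ \ ({t | 1 - γ ≤ f t} ∪ {t | f t ≤ -1 + γ})) <
      ENNReal.ofReal (2 * η / γ + η) :=
  totalVariation_compl_lt_of_integral_gt_general G hGnorm hγ0 f hf xs hxs hint
end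

section
/- Let K be a compact Hausdorff space, X a real Banach space, and G a countably additive, regular X-valued Borel vector measure on K with finite semivariation ‖G‖(K) < ∞. Let x* ∈ X* and let η > 0. Then there exist mutually disjoint compact sets F⁺, F⁻ ⊆ K such that the signed measure x*G is positive on F⁺, negative on F⁻, and ‖G‖( K ∖ (F⁺ ∪ F⁻) ) < η. -/
open MeasureTheory

/-! Take a Hahn decomposition `K = P ∪ Pᶜ` of `x*G` and use regularity to pick compact
`F⁺ ⊆ P`, `F⁻ ⊆ Pᶜ` with `‖G‖(P ∖ F⁺)` and `‖G‖(Pᶜ ∖ F⁻)` below `η / 2`. Positivity and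
negativity pass to subsets, and the complement of `F⁺ ∪ F⁻` is `(P ∖ F⁺) ∪ (Pᶜ ∖ F⁻)`. -/

section Semivariation

variable {K : Type*} [MeasurableSpace K] {X : Type*} [NormedAddCommGroup X] [NormedSpace ℝ X]
  (G : VectorMeasure K X)

lemma semivariation_mono {A B : Set K} (h : A ⊆ B) : semivariation G A ≤ semivariation G B :=
  iSup₂_mono fun _ _ => measure_mono h

lemma semivariation_union_le (A B : Set K) :
    semivariation G (A ∪ B) ≤ semivariation G A + semivariation G B :=
  iSup₂_le fun y hy => (measure_union_le A B).trans <|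
    add_le_add (le_iSup₂ (f := fun y _ => (dualMeasure G y).totalVariation A) y hy)
      (le_iSup₂ (f := fun y _ => (dualMeasure G y).totalVariation B) y hy)

lemma IsRegularVM.exists_isCompact_subset_semivariation_diff_lt [TopologicalSpace K]
    {G : VectorMeasure K X} (hreg : IsRegularVM G) {E : Set K} (hE : MeasurableSet E)
    {ε : ℝ} (hε : 0 < ε) :
    ∃ F, IsCompact F ∧ F ⊆ E ∧ semivariation G (E \ F) < ENNReal.ofReal ε := by
  obtain ⟨F, O, hF, -, hFE, hEO, hlt⟩ := hreg E hE ε hε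
  exact ⟨F, hF, hFE, (semivariation_mono G (Set.sdiff_subset_sdiff_left hEO)).trans_lt hlt⟩

end Semivariation

theorem exists_compact_hahn_semivariation_lt_general
    {K : Type*} [TopologicalSpace K]
    [MeasurableSpace K]
    {X : Type*} [NormedAddCommGroup X] [NormedSpace ℝ X]
    (G : VectorMeasure K X) (hreg : IsRegularVM G)
    (xs : StrongDual ℝ X) {η : ℝ} (hη : 0 < η) :
    ∃ Fp Fm : Set K, IsCompact Fp ∧ IsCompact Fm ∧ Disjoint Fp Fm ∧
      (∀ E : Set K, MeasurableSet E → E ⊆ Fp → 0 ≤ dualMeasure G xs E) ∧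
      (∀ E : Set K, MeasurableSet E → E ⊆ Fm → dualMeasure G xs E ≤ 0) ∧
      semivariation G (Set.univ \ (Fp ∪ Fm)) < ENNReal.ofReal η := by
  obtain ⟨P, hP, hpos, hneg⟩ := (dualMeasure G xs).exists_compl_positive_negative
  obtain ⟨Fp, hFp, hFpP, hltp⟩ :=
    hreg.exists_isCompact_subset_semivariation_diff_lt hP (half_pos hη)
  obtain ⟨Fm, hFm, hFmP, hltm⟩ :=
    hreg.exists_isCompact_subset_semivariation_diff_lt hP.compl (half_pos hη)
  refine ⟨Fp, Fm, hFp, hFm, disjoint_compl_right.mono hFpP hFmP,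
    fun E _ hE => VectorMeasure.nonneg_of_zero_le_restrict _
      (VectorMeasure.restrict_le_restrict_subset _ _ hP hpos (hE.trans hFpP)),
    fun E _ hE => VectorMeasure.nonpos_of_restrict_le_zero _
      (VectorMeasure.restrict_le_restrict_subset _ _ hP.compl hneg (hE.trans hFmP)), ?_⟩
  have hsplit : Set.univ \ (Fp ∪ Fm) ⊆ (P \ Fp) ∪ (Pᶜ \ Fm) := fun x hx => by
    by_cases hx' : x ∈ P <;> simp_all
  calc semivariation G (Set.univ \ (Fp ∪ Fm))
      ≤ semivariation G (P \ Fp) + semivariation G (Pᶜ \ Fm) :=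
        (semivariation_mono G hsplit).trans (semivariation_union_le G _ _)
    _ < ENNReal.ofReal (η / 2) + ENNReal.ofReal (η / 2) := ENNReal.add_lt_add hltp hltm
    _ = ENNReal.ofReal η := by
        rw [← ENNReal.ofReal_add (by positivity) (by positivity), add_halves]

/-- For a countably additive, regular `X`-valued Borel vector measure `G` on a compact
Hausdorff space `K` with finite semivariation, any `x* ∈ X*` and any `η > 0`, there are
disjoint compact sets `F⁺, F⁻` such that `x*G` is positive on `F⁺`, negative on `F⁻`,
and `‖G‖(K ∖ (F⁺ ∪ F⁻)) < η`. -/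
theorem exists_compact_hahn_semivariation_lt
    {K : Type*} [TopologicalSpace K] [CompactSpace K] [T2Space K]
    [MeasurableSpace K] [BorelSpace K]
    {X : Type*} [NormedAddCommGroup X] [NormedSpace ℝ X] [CompleteSpace X]
    (G : VectorMeasure K X) (hreg : IsRegularVM G)
    (hfin : semivariation G Set.univ < ⊤)
    (xs : StrongDual ℝ X) {η : ℝ} (hη : 0 < η) :
    ∃ Fp Fm : Set K, IsCompact Fp ∧ IsCompact Fm ∧ Disjoint Fp Fm ∧
      (∀ E : Set K, MeasurableSet E → E ⊆ Fp → 0 ≤ dualMeasure G xs E) ∧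
      (∀ E : Set K, MeasurableSet E → E ⊆ Fm → dualMeasure G xs E ≤ 0) ∧
      semivariation G (Set.univ \ (Fp ∪ Fm)) < ENNReal.ofReal η :=
  exists_compact_hahn_semivariation_lt_general G hreg xs hη
end

section
/- Let X and Y be real Banach spaces, let T : X → Y be a bounded linear operator with ‖T‖ = 1, let x₁ ∈ X with ‖x₁‖ = 1, let y* ∈ Y* with ‖y*‖ = 1, and let 0 < ε₂ < 1 be such that y*(T x₁) > 1 − ε₂². Define the bounded linear operator T̃ : X → Y by T̃ x = T x + ε₂ · y*(T x) · T x₁ for all x ∈ X. Then 1 − ε₂ < (1 − ε₂²)(1 + ε₂(1 − ε₂²)) ≤ ‖T̃ x₁‖ ≤ ‖T̃‖ ≤ 1 + ε₂. -/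
/-!
The upper bound is the triangle inequality: the rank-one perturbation `x ↦ ε y*(T x) T x₁` has
norm at most `ε`. For the lower bound, testing `T̃ x₁` against `y*` gives `a (1 + ε a)` with
`a = y*(T x₁) > 1 - ε²`, and `t ↦ t (1 + ε t)` is increasing on `[0, ∞)`.
-/

section RankOnePerturbation

variable {X Y : Type*} [SeminormedAddCommGroup X] [NormedSpace ℝ X]
  [SeminormedAddCommGroup Y] [NormedSpace ℝ Y]

theorem norm_add_smul_apply_le (f : StrongDual ℝ Y) (c : ℝ) (y v : Y) :
    ‖y + (c * f y) • v‖ ≤ (1 + |c| * ‖f‖ * ‖v‖) * ‖y‖ :=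
  calc ‖y + (c * f y) • v‖ ≤ ‖y‖ + ‖(c * f y) • v‖ := norm_add_le _ _
    _ = ‖y‖ + |c| * ‖f y‖ * ‖v‖ := by rw [norm_smul, norm_mul, Real.norm_eq_abs]
    _ ≤ ‖y‖ + |c| * (‖f‖ * ‖y‖) * ‖v‖ := by gcongr; exact f.le_opNorm y
    _ = (1 + |c| * ‖f‖ * ‖v‖) * ‖y‖ := by ring

theorem opNorm_le_of_apply_eq_add_smul (T S : X →L[ℝ] Y) (f : StrongDual ℝ Y) (c : ℝ) (v : Y)
    (hS : ∀ x, S x = T x + (c * f (T x)) • v) :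
    ‖S‖ ≤ (1 + |c| * ‖f‖ * ‖v‖) * ‖T‖ :=
  S.opNorm_le_bound (by positivity) fun x =>
    calc ‖S x‖ ≤ (1 + |c| * ‖f‖ * ‖v‖) * ‖T x‖ := hS x ▸ norm_add_smul_apply_le f c (T x) v
      _ ≤ (1 + |c| * ‖f‖ * ‖v‖) * (‖T‖ * ‖x‖) := by gcongr; exact T.le_opNorm x
      _ = (1 + |c| * ‖f‖ * ‖v‖) * ‖T‖ * ‖x‖ := by ring

theorem apply_mul_one_add_mul_le_norm (f : StrongDual ℝ Y) (hf : ‖f‖ ≤ 1) (c : ℝ) (y : Y) :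
    f y * (1 + c * f y) ≤ ‖y + (c * f y) • y‖ :=
  calc f y * (1 + c * f y) = f (y + (c * f y) • y) := by
        rw [map_add, map_smul, smul_eq_mul]; ring
    _ ≤ ‖f (y + (c * f y) • y)‖ := Real.le_norm_self _
    _ ≤ ‖f‖ * ‖y + (c * f y) • y‖ := f.le_opNorm _
    _ ≤ ‖y + (c * f y) • y‖ := mul_le_of_le_one_left (norm_nonneg _) hf

end RankOnePerturbation

theorem mul_one_add_mul_le_mul_one_add_mul {a b c : ℝ} (hc : 0 ≤ c) (hb : 0 ≤ b) (hab : b ≤ a) :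
    b * (1 + c * b) ≤ a * (1 + c * a) := by
  nlinarith [mul_nonneg (sub_nonneg.2 hab) (mul_nonneg hc (add_nonneg hb (hb.trans hab)))]

theorem one_sub_lt_mul_one_add_mul_one_sub_sq {ε : ℝ} (h0 : 0 < ε) (h1 : ε < 1) :
    1 - ε < (1 - ε ^ 2) * (1 + ε * (1 - ε ^ 2)) := by
  have hgap : (1 - ε ^ 2) * (1 + ε * (1 - ε ^ 2)) - (1 - ε) = ε * (1 - ε + (1 - ε ^ 2) ^ 2) := by
    ring
  have hpos : 0 < ε * (1 - ε + (1 - ε ^ 2) ^ 2) := mul_pos h0 (by positivity [sub_pos.2 h1])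
  linarith

theorem norm_perturbed_operator_bounds_general
    {X : Type*} [NormedAddCommGroup X] [NormedSpace ℝ X]
    {Y : Type*} [NormedAddCommGroup Y] [NormedSpace ℝ Y]
    (T : X →L[ℝ] Y) (hT : ‖T‖ = 1) (x₁ : X) (hx₁ : ‖x₁‖ = 1)
    (ys : StrongDual ℝ Y) (hys : ‖ys‖ = 1)
    {ε₂ : ℝ} (hε₂0 : 0 < ε₂) (hε₂1 : ε₂ < 1)
    (hy : ys (T x₁) > 1 - ε₂ ^ 2)
    (Ttilde : X →L[ℝ] Y)
    (hTt : ∀ x : X, Ttilde x = T x + (ε₂ * ys (T x)) • T x₁) :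
    1 - ε₂ < (1 - ε₂ ^ 2) * (1 + ε₂ * (1 - ε₂ ^ 2)) ∧
    (1 - ε₂ ^ 2) * (1 + ε₂ * (1 - ε₂ ^ 2)) ≤ ‖Ttilde x₁‖ ∧
    ‖Ttilde x₁‖ ≤ ‖Ttilde‖ ∧ ‖Ttilde‖ ≤ 1 + ε₂ := by
  have hTx₁ : ‖T x₁‖ ≤ 1 := by simpa [hT, hx₁] using T.le_opNorm x₁
  have hgap : 0 ≤ 1 - ε₂ ^ 2 := by nlinarith
  refine ⟨one_sub_lt_mul_one_add_mul_one_sub_sq hε₂0 hε₂1, ?_, Ttilde.unit_le_opNorm x₁ hx₁.le, ?_⟩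
  · rw [hTt]
    exact (mul_one_add_mul_le_mul_one_add_mul hε₂0.le hgap hy.le).trans
      (apply_mul_one_add_mul_le_norm ys hys.le ε₂ (T x₁))
  · calc ‖Ttilde‖ ≤ (1 + |ε₂| * ‖ys‖ * ‖T x₁‖) * ‖T‖ :=
          opNorm_le_of_apply_eq_add_smul T Ttilde ys ε₂ (T x₁) hTt
      _ ≤ (1 + ε₂ * 1 * 1) * 1 := by rw [abs_of_pos hε₂0, hys, hT]; gcongr
      _ = 1 + ε₂ := by ring

/-- Let `T : X → Y` with `‖T‖ = 1`, `‖x₁‖ = 1`, `‖y*‖ = 1` and `0 < ε₂ < 1` with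
`y*(T x₁) > 1 - ε₂²`. If `T̃ x = T x + ε₂ y*(T x) • T x₁` for all `x`, then
`1 - ε₂ < (1 - ε₂²)(1 + ε₂(1 - ε₂²)) ≤ ‖T̃ x₁‖ ≤ ‖T̃‖ ≤ 1 + ε₂`. -/
theorem norm_perturbed_operator_bounds
    {X : Type*} [NormedAddCommGroup X] [NormedSpace ℝ X] [CompleteSpace X]
    {Y : Type*} [NormedAddCommGroup Y] [NormedSpace ℝ Y] [CompleteSpace Y]
    (T : X →L[ℝ] Y) (hT : ‖T‖ = 1) (x₁ : X) (hx₁ : ‖x₁‖ = 1)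
    (ys : StrongDual ℝ Y) (hys : ‖ys‖ = 1)
    {ε₂ : ℝ} (hε₂0 : 0 < ε₂) (hε₂1 : ε₂ < 1)
    (hy : ys (T x₁) > 1 - ε₂ ^ 2)
    (Ttilde : X →L[ℝ] Y)
    (hTt : ∀ x : X, Ttilde x = T x + (ε₂ * ys (T x)) • T x₁) :
    1 - ε₂ < (1 - ε₂ ^ 2) * (1 + ε₂ * (1 - ε₂ ^ 2)) ∧
    (1 - ε₂ ^ 2) * (1 + ε₂ * (1 - ε₂ ^ 2)) ≤ ‖Ttilde x₁‖ ∧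
    ‖Ttilde x₁‖ ≤ ‖Ttilde‖ ∧ ‖Ttilde‖ ≤ 1 + ε₂ :=
  norm_perturbed_operator_bounds_general T hT x₁ hx₁ ys hys hε₂0 hε₂1 hy Ttilde hTt
end

section
/- Let K be a compact Hausdorff space, let X be a reflexive real Banach space, let G be a countably additive X-valued Borel vector measure on K with finite semivariation ‖G‖(K) < ∞, and let h : K → ℝ be a bounded Borel measurable function. Then there exists a unique bounded linear operator S : C(K) → X such that x*(Sf) = ∫_K f·h d(x*G) for every f ∈ C(K) and every x* ∈ X*, and ‖S‖ ≤ ‖G‖(K) · sup_{t ∈ K} |h(t)|. -/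
open MeasureTheory

/-!
For fixed `f`, the functional `x* ↦ ∫ f h d(x*G)` on `X*` is linear (the Jordan decomposition is
not additive, but the integral against `μ - ν` depends only on the signed measure `μ - ν`) and,
after rescaling `x*` into the unit ball, bounded by `‖G‖(K) · sup |h| · ‖f‖ · ‖x*‖`. Reflexivity
turns this element of `X**` into a vector `S f`; the bilinear bound makes `S` a bounded operator,
and uniqueness holds because `X*` separates the points of `X`.
-/

section SignedIntegral

variable {K : Type*} [MeasurableSpace K] {g g₁ g₂ : K → ℝ}

lemma Measurable.integrable_of_abs_le (hg : Measurable g) (hbdd : ∃ C, ∀ t, |g t| ≤ C)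
    (μ : Measure K) [IsFiniteMeasure μ] : Integrable g μ :=
  let ⟨C, hC⟩ := hbdd
  .of_bound hg.aestronglyMeasurable C (.of_forall hC)

lemma sintegral_eq_integral_sub_integral {s : SignedMeasure K} {μ ν : Measure K}
    [IsFiniteMeasure μ] [IsFiniteMeasure ν]
    (hs : s = μ.toSignedMeasure - ν.toSignedMeasure)
    (hg : Measurable g) (hbdd : ∃ C, ∀ t, |g t| ≤ C) :
    sintegral s g = (∫ t, g t ∂μ) - ∫ t, g t ∂ν := by
  set p := s.toJordanDecomposition.posPart
  set n := s.toJordanDecomposition.negPart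
  have hsum : p + ν = μ + n := by
    rw [← Measure.toSignedMeasure_eq_toSignedMeasure_iff, Measure.toSignedMeasure_add,
      Measure.toSignedMeasure_add, ← sub_eq_sub_iff_add_eq_add, ← hs]
    exact s.toSignedMeasure_toJordanDecomposition
  have hint := hg.integrable_of_abs_le hbdd
  have key : (∫ t, g t ∂p) + ∫ t, g t ∂ν = (∫ t, g t ∂μ) + ∫ t, g t ∂n := by
    rw [← integral_add_measure (hint p) (hint ν), ← integral_add_measure (hint μ) (hint n), hsum]
  rw [sintegral]
  linarith

lemma sintegral_add_measure (s t : SignedMeasure K) (hg : Measurable g)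
    (hbdd : ∃ C, ∀ t, |g t| ≤ C) :
    sintegral (s + t) g = sintegral s g + sintegral t g := by
  have hst : s + t = (s.toJordanDecomposition.posPart + t.toJordanDecomposition.posPart
      ).toSignedMeasure - (s.toJordanDecomposition.negPart + t.toJordanDecomposition.negPart
      ).toSignedMeasure := by
    rw [Measure.toSignedMeasure_add, Measure.toSignedMeasure_add]
    conv_lhs => rw [← s.toSignedMeasure_toJordanDecomposition,
      ← t.toSignedMeasure_toJordanDecomposition]
    simp only [JordanDecomposition.toSignedMeasure]
    abel
  have hint := hg.integrable_of_abs_le hbdd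
  rw [sintegral_eq_integral_sub_integral hst hg hbdd, integral_add_measure (hint _) (hint _),
    integral_add_measure (hint _) (hint _), sintegral, sintegral]
  ring

lemma sintegral_smul_measure (c : ℝ) (s : SignedMeasure K) (g : K → ℝ) :
    sintegral (c • s) g = c * sintegral s g := by
  rw [sintegral, sintegral, SignedMeasure.toJordanDecomposition_smul_real]
  rcases le_or_gt 0 c with hc | hc
  · rw [JordanDecomposition.real_smul_posPart_nonneg _ _ hc,
      JordanDecomposition.real_smul_negPart_nonneg _ _ hc,
      integral_smul_nnreal_measure, integral_smul_nnreal_measure, NNReal.smul_def,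
      NNReal.smul_def, Real.coe_toNNReal _ hc, smul_eq_mul, smul_eq_mul, mul_sub]
  · rw [JordanDecomposition.real_smul_posPart_neg _ _ hc,
      JordanDecomposition.real_smul_negPart_neg _ _ hc,
      integral_smul_nnreal_measure, integral_smul_nnreal_measure, NNReal.smul_def,
      NNReal.smul_def, Real.coe_toNNReal _ (neg_nonneg.2 hc.le), smul_eq_mul, smul_eq_mul]
    ring

lemma sintegral_add (s : SignedMeasure K) (hg₁ : Measurable g₁) (hbdd₁ : ∃ C, ∀ t, |g₁ t| ≤ C)
    (hg₂ : Measurable g₂) (hbdd₂ : ∃ C, ∀ t, |g₂ t| ≤ C) :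
    sintegral s (fun t => g₁ t + g₂ t) = sintegral s g₁ + sintegral s g₂ := by
  have hint₁ := hg₁.integrable_of_abs_le hbdd₁
  have hint₂ := hg₂.integrable_of_abs_le hbdd₂
  rw [sintegral, sintegral, sintegral, integral_add (hint₁ _) (hint₂ _),
    integral_add (hint₁ _) (hint₂ _)]
  ring

lemma sintegral_const_mul (s : SignedMeasure K) (c : ℝ) (g : K → ℝ) :
    sintegral s (fun t => c * g t) = c * sintegral s g := by
  rw [sintegral, sintegral, integral_const_mul, integral_const_mul, mul_sub]

lemma abs_sintegral_le (s : SignedMeasure K) {C : ℝ} (hC : ∀ t, |g t| ≤ C) :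
    |sintegral s g| ≤ C * s.totalVariation.real Set.univ := by
  have hbound (μ : Measure K) [IsFiniteMeasure μ] : |∫ t, g t ∂μ| ≤ C * μ.real Set.univ :=
    norm_integral_le_of_norm_le_const (.of_forall hC : ∀ᵐ t ∂μ, ‖g t‖ ≤ C)
  rw [SignedMeasure.totalVariation, measureReal_add_apply, mul_add]
  exact (abs_sub _ _).trans (add_le_add (hbound _) (hbound _))

end SignedIntegral

section DualMeasure

variable {K : Type*} [MeasurableSpace K] {X : Type*} [NormedAddCommGroup X] [NormedSpace ℝ X]
  (G : VectorMeasure K X)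

lemma dualMeasure_add (xs ys : StrongDual ℝ X) :
    dualMeasure G (xs + ys) = dualMeasure G xs + dualMeasure G ys :=
  VectorMeasure.ext fun _ _ => rfl

lemma dualMeasure_smul (c : ℝ) (xs : StrongDual ℝ X) :
    dualMeasure G (c • xs) = c • dualMeasure G xs :=
  VectorMeasure.ext fun _ _ => rfl

lemma totalVariation_dualMeasure_le_semivariation_s10 (hfin : semivariation G Set.univ < ⊤)
    {xs : StrongDual ℝ X} (hxs : ‖xs‖ ≤ 1) :
    (dualMeasure G xs).totalVariation.real Set.univ ≤ (semivariation G Set.univ).toReal :=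
  ENNReal.toReal_mono hfin.ne <| le_biSup (fun ys => (dualMeasure G ys).totalVariation Set.univ)
    (mem_closedBall_zero_iff.2 hxs)

lemma abs_sintegral_dualMeasure_le (hfin : semivariation G Set.univ < ⊤) {g : K → ℝ} {C : ℝ}
    (hC0 : 0 ≤ C) (hC : ∀ t, |g t| ≤ C) (xs : StrongDual ℝ X) :
    |sintegral (dualMeasure G xs) g| ≤ C * (semivariation G Set.univ).toReal * ‖xs‖ := by
  -- valid also for `xs = 0`, where `‖xs‖⁻¹ = 0`
  set ys := ‖xs‖⁻¹ • xs
  have hys : ‖ys‖ ≤ 1 := by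
    rw [norm_smul, norm_inv, norm_norm]
    exact inv_mul_le_one
  have hxs : xs = ‖xs‖ • ys := by
    rcases eq_or_ne xs 0 with rfl | hne
    · simp
    · rw [smul_smul, mul_inv_cancel₀ (norm_ne_zero_iff.2 hne), one_smul]
  calc |sintegral (dualMeasure G xs) g|
      = ‖xs‖ * |sintegral (dualMeasure G ys) g| := by
        rw [hxs, dualMeasure_smul, sintegral_smul_measure, abs_mul, abs_norm, ← hxs]
    _ ≤ ‖xs‖ * (C * (semivariation G Set.univ).toReal) := by
        gcongr
        exact (abs_sintegral_le _ hC).trans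
          (mul_le_mul_of_nonneg_left (totalVariation_dualMeasure_le_semivariation_s10 G hfin hys) hC0)
    _ = C * (semivariation G Set.univ).toReal * ‖xs‖ := by ring

end DualMeasure

lemma ContinuousMap.abs_apply_mul_le {K : Type*} [TopologicalSpace K] [CompactSpace K]
    (f : C(K, ℝ)) {h : K → ℝ} {C : ℝ} (hC : ∀ t, |h t| ≤ C) (t : K) :
    |f t * h t| ≤ ‖f‖ * C := by
  rw [abs_mul]
  exact mul_le_mul (f.norm_coe_le_norm t) (hC t) (abs_nonneg _) (norm_nonneg _)

section DensityForm

variable {K : Type*} [TopologicalSpace K] [CompactSpace K] [MeasurableSpace K]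
  [OpensMeasurableSpace K] {X : Type*} [NormedAddCommGroup X] [NormedSpace ℝ X]
  {h : K → ℝ} {C : ℝ}

variable (G : VectorMeasure K X) (hh : Measurable h) (hbdd : ∃ C, ∀ t, |h t| ≤ C)

noncomputable def densityForm : C(K, ℝ) →ₗ[ℝ] StrongDual ℝ X →ₗ[ℝ] ℝ :=
  have hbdd' (f : C(K, ℝ)) : ∃ C, ∀ t, |f t * h t| ≤ C :=
    let ⟨C, hC⟩ := hbdd
    ⟨‖f‖ * C, f.abs_apply_mul_le hC⟩
  LinearMap.mk₂ ℝ (fun f xs => sintegral (dualMeasure G xs) fun t => f t * h t)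
    (fun f₁ f₂ xs => by
      simp only [ContinuousMap.add_apply, add_mul]
      exact sintegral_add _ (f₁.continuous.measurable.mul hh) (hbdd' f₁)
        (f₂.continuous.measurable.mul hh) (hbdd' f₂))
    (fun c f xs => by
      simp only [ContinuousMap.smul_apply, smul_eq_mul, mul_assoc]
      exact sintegral_const_mul _ c _)
    (fun f xs ys => by
      rw [dualMeasure_add]
      exact sintegral_add_measure _ _ (f.continuous.measurable.mul hh) (hbdd' f))
    (fun c f xs => by rw [dualMeasure_smul, sintegral_smul_measure, smul_eq_mul])

lemma densityForm_apply (f : C(K, ℝ)) (xs : StrongDual ℝ X) :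
    densityForm G hh hbdd f xs = sintegral (dualMeasure G xs) fun t => f t * h t :=
  rfl

lemma norm_densityForm_le (hfin : semivariation G Set.univ < ⊤) (hC0 : 0 ≤ C)
    (hC : ∀ t, |h t| ≤ C) (f : C(K, ℝ)) (xs : StrongDual ℝ X) :
    ‖densityForm G hh hbdd f xs‖ ≤ (semivariation G Set.univ).toReal * C * ‖f‖ * ‖xs‖ := by
  rw [Real.norm_eq_abs, densityForm_apply]
  exact (abs_sintegral_dualMeasure_le G hfin (by positivity) (f.abs_apply_mul_le hC) xs).trans_eq
    (by ring)

end DensityForm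

lemma exists_continuousLinearMap_of_surjective_inclusionInDoubleDual {E X : Type*}
    [NormedAddCommGroup E] [NormedSpace ℝ E] [NormedAddCommGroup X] [NormedSpace ℝ X]
    (hrefl : Function.Surjective ⇑(NormedSpace.inclusionInDoubleDual ℝ X))
    (B : E →ₗ[ℝ] StrongDual ℝ X →ₗ[ℝ] ℝ) {M : ℝ} (hM : 0 ≤ M)
    (hB : ∀ f xs, ‖B f xs‖ ≤ M * ‖f‖ * ‖xs‖) :
    ∃ S : E →L[ℝ] X, (∀ f xs, xs (S f) = B f xs) ∧ ‖S‖ ≤ M := by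
  let ι := LinearIsometryEquiv.ofSurjective (NormedSpace.inclusionInDoubleDualLi (E := X) ℝ) hrefl
  refine ⟨ι.symm.toLinearIsometry.toContinuousLinearMap.comp (B.mkContinuous₂ M hB),
    fun f xs => ?_, ?_⟩
  · exact congrArg (· xs) (ι.apply_symm_apply (B.mkContinuous₂ M hB f))
  · refine ContinuousLinearMap.opNorm_le_bound _ hM fun f => ?_
    calc ‖ι.symm (B.mkContinuous₂ M hB f)‖ = ‖B.mkContinuous₂ M hB f‖ := ι.symm.norm_map _
      _ ≤ M * ‖f‖ :=
        (B.mkContinuous₂ M hB).le_of_opNorm_le (LinearMap.mkContinuous₂_norm_le _ hM hB) f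

theorem exists_unique_operator_of_boundedDensity_general
    {K : Type*} [TopologicalSpace K] [CompactSpace K]
    [MeasurableSpace K] [BorelSpace K]
    {X : Type*} [NormedAddCommGroup X] [NormedSpace ℝ X]
    (hrefl : Function.Surjective ⇑(NormedSpace.inclusionInDoubleDual ℝ X))
    (G : VectorMeasure K X) (hfin : semivariation G Set.univ < ⊤)
    (h : K → ℝ) (hmeas : Measurable h) (hbdd : ∃ C : ℝ, ∀ t : K, |h t| ≤ C) :
    ∃ S : C(K, ℝ) →L[ℝ] X,
      (∀ (f : C(K, ℝ)) (xs : StrongDual ℝ X),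
        xs (S f) = sintegral (dualMeasure G xs) (fun t => f t * h t)) ∧
      ‖S‖ ≤ (semivariation G Set.univ).toReal * ⨆ t : K, |h t| ∧
      ∀ S' : C(K, ℝ) →L[ℝ] X,
        (∀ (f : C(K, ℝ)) (xs : StrongDual ℝ X),
          xs (S' f) = sintegral (dualMeasure G xs) (fun t => f t * h t)) → S' = S := by
  obtain ⟨C₀, hC₀⟩ := hbdd
  have hle : ∀ t, |h t| ≤ ⨆ t, |h t| :=
    le_ciSup ⟨C₀, by rintro _ ⟨t, rfl⟩; exact hC₀ t⟩
  have hsup : 0 ≤ ⨆ t, |h t| := Real.iSup_nonneg fun t => abs_nonneg (h t)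
  obtain ⟨S, hS, hSnorm⟩ := exists_continuousLinearMap_of_surjective_inclusionInDoubleDual hrefl
    (densityForm G hmeas ⟨C₀, hC₀⟩) (by positivity) (norm_densityForm_le G hmeas _ hfin hsup hle)
  refine ⟨S, hS, hSnorm, fun S' hS' => ContinuousLinearMap.ext fun f => ?_⟩
  exact SeparatingDual.eq_iff_forall_dual_eq.2 fun xs => (hS' f xs).trans (hS f xs).symm

/-- Let `K` be a compact Hausdorff space, `X` a reflexive real Banach space, `G` a
countably additive `X`-valued Borel vector measure on `K` with finite semivariation, and
`h : K → ℝ` a bounded Borel measurable function. Then there is a unique bounded linear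
operator `S : C(K) → X` with `x*(S f) = ∫_K f·h d(x*G)` for all `f` and `x*`, and it
satisfies `‖S‖ ≤ ‖G‖(K) · sup_t |h t|`. -/
theorem exists_unique_operator_of_boundedDensity
    {K : Type*} [TopologicalSpace K] [CompactSpace K] [T2Space K]
    [MeasurableSpace K] [BorelSpace K]
    {X : Type*} [NormedAddCommGroup X] [NormedSpace ℝ X] [CompleteSpace X]
    (hrefl : Function.Surjective ⇑(NormedSpace.inclusionInDoubleDual ℝ X))
    (G : VectorMeasure K X) (hfin : semivariation G Set.univ < ⊤)
    (h : K → ℝ) (hmeas : Measurable h) (hbdd : ∃ C : ℝ, ∀ t : K, |h t| ≤ C) :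
    ∃ S : C(K, ℝ) →L[ℝ] X,
      (∀ (f : C(K, ℝ)) (xs : StrongDual ℝ X),
        xs (S f) = sintegral (dualMeasure G xs) (fun t => f t * h t)) ∧
      ‖S‖ ≤ (semivariation G Set.univ).toReal * ⨆ t : K, |h t| ∧
      ∀ S' : C(K, ℝ) →L[ℝ] X,
        (∀ (f : C(K, ℝ)) (xs : StrongDual ℝ X),
          xs (S' f) = sintegral (dualMeasure G xs) (fun t => f t * h t)) → S' = S :=
  exists_unique_operator_of_boundedDensity_general hrefl G hfin h hmeas hbdd
end
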